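/- Let m > 0. There exists a constant C > 0, depending only on m, such that for every h ∈ L²(ℝ; ℂ) the function (k₁, k₂) ↦ h(k₁ + k₂) · ε(k₁)^{-1/2} ε(k₂)^{-1/2} belongs to L²(ℝ²; ℂ) and its L²(ℝ²)-norm is at most C · ‖h‖_{L²(ℝ)}. -/

import Mathlib

/-!
By AM–GM, `ε(k₁)⁻¹ ε(k₂)⁻¹ ≤ (ε(k₁)⁻² + ε(k₂)⁻²) / 2`. Since the shear `(x, y) ↦ (x, x + y)`
preserves Lebesgue measure, `∫∫ |h(k₁ + k₂)|² ε(k₁)⁻² dk₁ dk₂ = ‖ε⁻²‖₁ ‖h‖₂²`, and likewise with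
`k₂` in place of `k₁`. As `‖ε⁻²‖₁ = ∫ (k² + m²)⁻¹ dk = π / m`, one may take `C = √(π / m)`.
-/

open MeasureTheory

/-- The one-particle energy `ε(k) = (k² + m²)^{1/2}`. -/
noncomputable def eps (m k : ℝ) : ℝ := Real.sqrt (k ^ 2 + m ^ 2)

open scoped ENNReal

theorem eLpNorm_two_sq {α E : Type*} [MeasurableSpace α] [NormedAddCommGroup E] (f : α → E)
    (μ : Measure α) : eLpNorm f 2 μ ^ 2 = ∫⁻ x, ‖f x‖ₑ ^ 2 ∂μ := by
  simpa using eLpNorm_nnreal_pow_eq_lintegral (f := f) (μ := μ) (p := 2) two_ne_zero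

section AddGroup

variable {G : Type*} [MeasurableSpace G] [AddGroup G] [MeasurableAdd₂ G] [MeasurableNeg G]
  {μ : Measure G} [SFinite μ] [μ.IsAddLeftInvariant]

theorem lintegral_fst_mul_comp_add {f g : G → ℝ≥0∞} (hf : AEMeasurable f μ)
    (hg : AEMeasurable g μ) :
    ∫⁻ p, f p.1 * g (p.1 + p.2) ∂μ.prod μ = (∫⁻ x, f x ∂μ) * ∫⁻ x, g x ∂μ := by
  rw [← lintegral_prod_mul hf hg]
  exact (measurePreserving_prod_add μ μ).lintegral_comp_emb
    (MeasurableEquiv.shearAddRight G).measurableEmbedding fun q => f q.1 * g q.2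

end AddGroup

section AddCommGroup

variable {G : Type*} [MeasurableSpace G] [AddCommGroup G] [MeasurableAdd₂ G] [MeasurableNeg G]
  {μ : Measure G} [SFinite μ] [μ.IsAddLeftInvariant]

theorem lintegral_snd_mul_comp_add {f g : G → ℝ≥0∞} (hf : AEMeasurable f μ)
    (hg : AEMeasurable g μ) :
    ∫⁻ p, f p.2 * g (p.1 + p.2) ∂μ.prod μ = (∫⁻ x, f x ∂μ) * ∫⁻ x, g x ∂μ := by
  rw [← lintegral_fst_mul_comp_add hf hg, ← lintegral_prod_swap]
  simp only [Prod.fst_swap, Prod.snd_swap, add_comm]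

theorem sq_eLpNorm_comp_add_mul_le {𝕜 : Type*} [NormedRing 𝕜] [NormMulClass 𝕜] {f : G → 𝕜}
    (hf : AEStronglyMeasurable f μ) {k : G × G → 𝕜} {w : G → ℝ≥0∞} (hw : AEMeasurable w μ)
    (hk : ∀ p, ‖k p‖ₑ ^ 2 ≤ (w p.1 + w p.2) / 2) :
    eLpNorm (fun p => f (p.1 + p.2) * k p) 2 (μ.prod μ) ^ 2
      ≤ (∫⁻ x, w x ∂μ) * eLpNorm f 2 μ ^ 2 := by
  set φ : G → ℝ≥0∞ := fun x => ‖f x‖ₑ ^ 2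
  have hφ : AEMeasurable φ μ := hf.enorm.pow_const 2
  have hmeas : AEMeasurable (fun p : G × G => w p.1 * φ (p.1 + p.2)) (μ.prod μ) :=
    (hw.comp_quasiMeasurePreserving Measure.quasiMeasurePreserving_fst).mul
      (hφ.comp_quasiMeasurePreserving (quasiMeasurePreserving_add μ μ))
  rw [eLpNorm_two_sq, eLpNorm_two_sq]
  calc ∫⁻ p, ‖f (p.1 + p.2) * k p‖ₑ ^ 2 ∂μ.prod μ
      ≤ ∫⁻ p, 2⁻¹ * (w p.1 * φ (p.1 + p.2) + w p.2 * φ (p.1 + p.2)) ∂μ.prod μ := by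
        refine lintegral_mono fun p => ?_
        rw [enorm_mul, mul_pow, mul_comm, ← add_mul, ← mul_assoc, ← ENNReal.div_eq_inv_mul]
        gcongr
        exact hk p
    _ = 2⁻¹ * ((∫⁻ x, w x ∂μ) * ∫⁻ x, φ x ∂μ + (∫⁻ x, w x ∂μ) * ∫⁻ x, φ x ∂μ) := by
        rw [lintegral_const_mul' _ _ (by norm_num), lintegral_add_left' hmeas,
          lintegral_fst_mul_comp_add hw hφ, lintegral_snd_mul_comp_add hw hφ]
    _ = (∫⁻ x, w x ∂μ) * ∫⁻ x, φ x ∂μ := by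
        rw [← two_mul, ← mul_assoc, ENNReal.inv_mul_cancel two_ne_zero ENNReal.ofNat_ne_top,
          one_mul]

end AddCommGroup

theorem inv_sq_add_sq_eq_mul_inv_one_add_sq {m : ℝ} (hm : m ≠ 0) (x : ℝ) :
    (x ^ 2 + m ^ 2)⁻¹ = (m ^ 2)⁻¹ * (1 + (x / m) ^ 2)⁻¹ := by
  field_simp
  ring

theorem integrable_inv_sq_add_sq {m : ℝ} (hm : m ≠ 0) :
    Integrable fun x : ℝ => (x ^ 2 + m ^ 2)⁻¹ := by
  simp_rw [inv_sq_add_sq_eq_mul_inv_one_add_sq hm]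
  exact (integrable_inv_one_add_sq.comp_div hm).const_mul _

theorem integral_univ_inv_sq_add_sq {m : ℝ} (hm : 0 < m) :
    ∫ x : ℝ, (x ^ 2 + m ^ 2)⁻¹ = Real.pi / m := by
  simp_rw [inv_sq_add_sq_eq_mul_inv_one_add_sq hm.ne']
  rw [integral_const_mul, Measure.integral_comp_div (fun y => (1 + y ^ 2)⁻¹) m,
    integral_univ_inv_one_add_sq, abs_of_pos hm, smul_eq_mul]
  field_simp

theorem lintegral_ofReal_inv_sq_add_sq {m : ℝ} (hm : 0 < m) :
    ∫⁻ x : ℝ, ENNReal.ofReal (x ^ 2 + m ^ 2)⁻¹ = ENNReal.ofReal (Real.pi / m) := by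
  rw [← integral_univ_inv_sq_add_sq hm,
    ofReal_integral_eq_lintegral_ofReal (integrable_inv_sq_add_sq hm.ne')]
  exact Filter.Eventually.of_forall fun x => by positivity

theorem sq_rpow_neg_half {a : ℝ} (ha : 0 ≤ a) : (a ^ (-(1 : ℝ) / 2)) ^ 2 = a⁻¹ := by
  rw [← Real.rpow_natCast, ← Real.rpow_mul ha]
  norm_num [Real.rpow_neg_one]

theorem eps_nonneg (m k : ℝ) : 0 ≤ eps m k := Real.sqrt_nonneg _

theorem inv_eps_sq (m k : ℝ) : (eps m k)⁻¹ ^ 2 = (k ^ 2 + m ^ 2)⁻¹ := by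
  rw [inv_pow, eps, Real.sq_sqrt (by positivity)]

noncomputable def epsWeight (m : ℝ) (p : ℝ × ℝ) : ℝ :=
  eps m p.1 ^ (-(1 : ℝ) / 2) * eps m p.2 ^ (-(1 : ℝ) / 2)

theorem measurable_epsWeight (m : ℝ) : Measurable (epsWeight m) := by
  unfold epsWeight eps
  fun_prop

theorem sq_epsWeight_le (m : ℝ) (p : ℝ × ℝ) :
    epsWeight m p ^ 2 ≤ ((p.1 ^ 2 + m ^ 2)⁻¹ + (p.2 ^ 2 + m ^ 2)⁻¹) / 2 := by
  rw [epsWeight, mul_pow, sq_rpow_neg_half (eps_nonneg m p.1),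
    sq_rpow_neg_half (eps_nonneg m p.2), ← inv_eps_sq, ← inv_eps_sq]
  linarith [two_mul_le_add_sq (eps m p.1)⁻¹ (eps m p.2)⁻¹]

theorem enorm_sq_epsWeight_le (m : ℝ) (p : ℝ × ℝ) :
    ‖(epsWeight m p : ℂ)‖ₑ ^ 2
      ≤ (ENNReal.ofReal (p.1 ^ 2 + m ^ 2)⁻¹ + ENNReal.ofReal (p.2 ^ 2 + m ^ 2)⁻¹) / 2 := by
  rw [← ofReal_norm, Complex.norm_real, Real.norm_eq_abs, ← ENNReal.ofReal_pow (abs_nonneg _),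
    sq_abs, ← ENNReal.ofReal_add (by positivity) (by positivity), ← ENNReal.ofReal_ofNat 2,
    ← ENNReal.ofReal_div_of_pos two_pos]
  exact ENNReal.ofReal_le_ofReal (sq_epsWeight_le m p)

/-- Quantitative core of the bound `‖R‖_{L²(ℝ²)} ≤ C ‖V′‖_{L²(ℝ)}` in Lemma 2.1 of the paper:
for `m > 0` there is `C > 0` (depending only on `m`) such that for every `h ∈ L²(ℝ; ℂ)` the
function `(k₁,k₂) ↦ h(k₁+k₂) ε(k₁)^{-1/2} ε(k₂)^{-1/2}` is in `L²(ℝ²; ℂ)` with norm at most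
`C‖h‖_{L²}`. -/
theorem stmt_2 (m : ℝ) (hm : 0 < m) :
    ∃ C : ℝ, 0 < C ∧ ∀ h : ℝ → ℂ, MemLp h 2 (volume : Measure ℝ) →
      MemLp (fun p : ℝ × ℝ =>
          h (p.1 + p.2) * ((eps m p.1 ^ (-(1 : ℝ)/2) * eps m p.2 ^ (-(1 : ℝ)/2) : ℝ) : ℂ))
        2 (volume : Measure (ℝ × ℝ)) ∧
      eLpNorm (fun p : ℝ × ℝ =>
          h (p.1 + p.2) * ((eps m p.1 ^ (-(1 : ℝ)/2) * eps m p.2 ^ (-(1 : ℝ)/2) : ℝ) : ℂ))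
        2 (volume : Measure (ℝ × ℝ))
        ≤ ENNReal.ofReal C * eLpNorm h 2 (volume : Measure ℝ) := by
  refine ⟨√(Real.pi / m), by positivity, fun h hh => ?_⟩
  have hbound : eLpNorm (fun p => h (p.1 + p.2) * (epsWeight m p : ℂ)) 2 volume
      ≤ ENNReal.ofReal √(Real.pi / m) * eLpNorm h 2 volume := by
    rw [← ENNReal.pow_le_pow_left_iff two_ne_zero, mul_pow,
      ← ENNReal.ofReal_pow (Real.sqrt_nonneg _), Real.sq_sqrt (by positivity),
      ← lintegral_ofReal_inv_sq_add_sq hm]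
    exact sq_eLpNorm_comp_add_mul_le hh.1 (by fun_prop) (enorm_sq_epsWeight_le m)
  refine ⟨⟨?_, hbound.trans_lt (ENNReal.mul_lt_top ENNReal.ofReal_lt_top hh.2)⟩, hbound⟩
  exact (hh.1.comp_quasiMeasurePreserving (quasiMeasurePreserving_add volume volume)).mul
    (Complex.measurable_ofReal.comp (measurable_epsWeight m)).aestronglyMeasurable
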